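/- arXiv:1309.0125 — 5 statements merged into one kernel-verified Lean document; each statement's English description precedes it below -/
import Mathlib

section
/- Let φ : [0, ∞) → [0, ∞) be a quasi-concave function (φ(0) = 0, φ(t) > 0 for t > 0, φ nondecreasing, and t ↦ φ(t)/t nonincreasing on (0, ∞)) satisfying the Δ₂ condition globally: there exists K > 0 with φ(Kx) ≥ 2φ(x) for all x ≥ 0. Then there exists ε > 0 such that for all 0 < y ≤ 1, all 0 < p ≤ ε, and all x > 0, φ(yx) ≤ 2·y^p·φ(x). -/
/-!
Iterating `Δ₂` gives `2ⁿ φ(x) ≤ φ(Kⁿ x)`, and `K > 1` because `φ` is positive and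
monotone. For `0 < y ≤ 1` pick `n = ⌊log_K (1/y)⌋`: then `y Kⁿ ≤ 1`, so `φ(yx) ≤ 2⁻ⁿ φ(x)`,
while `2⁻ⁿ ≤ 2 · 2^(log_K y) = 2 y^ε` with `ε = log_K 2`; and `y^ε ≤ y^p` for `p ≤ ε`.
-/

open Real

section Delta2

variable {φ : ℝ → ℝ} {K : ℝ}

theorem one_lt_of_delta2 (hmono : MonotoneOn φ (Set.Ici 0)) (hpos : 0 < φ 1) (hK : 0 < K)
    (hΔ₂ : 2 * φ 1 ≤ φ K) : 1 < K := by
  by_contra! hK1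
  have := hmono (Set.mem_Ici.mpr hK.le) (Set.mem_Ici.mpr zero_le_one) hK1
  linarith

theorem two_pow_mul_le_of_delta2 (hK : 0 ≤ K)
    (hΔ₂ : ∀ x, 0 ≤ x → 2 * φ x ≤ φ (K * x)) (n : ℕ) {x : ℝ} (hx : 0 ≤ x) :
    2 ^ n * φ x ≤ φ (K ^ n * x) := by
  induction n with
  | zero => simp
  | succ n ih =>
    calc 2 ^ (n + 1) * φ x = 2 * (2 ^ n * φ x) := by ring
      _ ≤ 2 * φ (K ^ n * x) := by gcongr
      _ ≤ φ (K * (K ^ n * x)) := hΔ₂ _ (by positivity)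
      _ = φ (K ^ (n + 1) * x) := by ring_nf

theorem le_div_two_pow_of_delta2 (hmono : MonotoneOn φ (Set.Ici 0)) (hK : 0 ≤ K)
    (hΔ₂ : ∀ x, 0 ≤ x → 2 * φ x ≤ φ (K * x)) {n : ℕ} {y x : ℝ} (hy : 0 ≤ y)
    (hyK : y * K ^ n ≤ 1) (hx : 0 ≤ x) : φ (y * x) ≤ φ x / 2 ^ n := by
  rw [le_div_iff₀' (by positivity)]
  calc 2 ^ n * φ (y * x) ≤ φ (K ^ n * (y * x)) :=
        two_pow_mul_le_of_delta2 hK hΔ₂ n (by positivity)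
    _ ≤ φ x := hmono (by simp only [Set.mem_Ici]; positivity) hx (by nlinarith)

end Delta2

theorem rpow_logb_comm {b x y : ℝ} (hb : 0 < b) (hb1 : b ≠ 1) (hx : 0 < x) (hy : 0 < y) :
    x ^ logb b y = y ^ logb b x := by
  conv_lhs => rw [← rpow_logb hb hb1 hx, ← rpow_mul hb.le, mul_comm, rpow_mul hb.le,
    rpow_logb hb hb1 hy]

theorem exists_mul_pow_le_one_and_inv_two_pow_le {K y : ℝ} (hK : 1 < K) (hy : 0 < y)
    (hy1 : y ≤ 1) : ∃ n : ℕ, y * K ^ n ≤ 1 ∧ (2 ^ n)⁻¹ ≤ 2 * y ^ logb K 2 := by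
  have hK0 : 0 < K := one_pos.trans hK
  set t := -logb K y
  have ht : 0 ≤ t := neg_nonneg.mpr (logb_nonpos hK hy.le hy1)
  refine ⟨⌊t⌋₊, ?_, ?_⟩
  · have hKt : K ^ t = y⁻¹ := by rw [rpow_neg hK0.le, rpow_logb hK0 hK.ne' hy]
    calc y * K ^ ⌊t⌋₊ = y * K ^ (⌊t⌋₊ : ℝ) := by rw [rpow_natCast]
      _ ≤ y * K ^ t := by gcongr; exacts [hK.le, Nat.floor_le ht]
      _ = 1 := by rw [hKt, mul_inv_cancel₀ hy.ne']
  · calc (2 ^ ⌊t⌋₊ : ℝ)⁻¹ = 2 ^ (-(⌊t⌋₊ : ℝ)) := by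
          rw [rpow_neg zero_le_two, rpow_natCast]
      _ ≤ 2 ^ (1 - t) := by
          gcongr
          · exact one_le_two
          · linarith [Nat.lt_floor_add_one t]
      _ = 2 * y ^ logb K 2 := by
          rw [rpow_sub zero_lt_two, rpow_one, rpow_neg zero_le_two,
            rpow_logb_comm hK0 hK.ne' zero_lt_two hy, div_eq_mul_inv, inv_inv]

theorem quasiconcave_delta2_growth_general
    (φ : ℝ → ℝ)
    (hpos : ∀ t : ℝ, 0 < t → 0 < φ t)
    (hmono : MonotoneOn φ (Set.Ici (0 : ℝ)))
    (K : ℝ) (hK : 0 < K)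
    (hΔ₂ : ∀ x : ℝ, 0 ≤ x → 2 * φ x ≤ φ (K * x)) :
    ∃ ε : ℝ, 0 < ε ∧ ∀ y : ℝ, 0 < y → y ≤ 1 → ∀ p : ℝ, 0 < p → p ≤ ε →
      ∀ x : ℝ, 0 < x → φ (y * x) ≤ 2 * y ^ p * φ x := by
  have hK1 : 1 < K :=
    one_lt_of_delta2 hmono (hpos 1 one_pos) hK (by simpa using hΔ₂ 1 zero_le_one)
  refine ⟨logb K 2, logb_pos hK1 one_lt_two, fun y hy hy1 p _ hpε x hx => ?_⟩
  obtain ⟨n, hyK, hn⟩ := exists_mul_pow_le_one_and_inv_two_pow_le hK1 hy hy1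
  have hφx := (hpos x hx).le
  calc φ (y * x) ≤ φ x / 2 ^ n := le_div_two_pow_of_delta2 hmono hK.le hΔ₂ hy.le hyK hx.le
    _ = (2 ^ n)⁻¹ * φ x := div_eq_inv_mul _ _
    _ ≤ 2 * y ^ logb K 2 * φ x := by gcongr
    _ ≤ 2 * y ^ p * φ x := by gcongr 2 * ?_ * _; exact rpow_le_rpow_of_exponent_ge hy hy1 hpε

/-- If a quasi-concave function `φ` satisfies the `Δ₂` condition globally, then there
is `ε > 0` such that `φ(yx) ≤ 2·y^p·φ(x)` for all `0 < y ≤ 1`, `0 < p ≤ ε`, `x > 0`. -/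
theorem quasiconcave_delta2_growth
    (φ : ℝ → ℝ)
    (h0 : φ 0 = 0)
    (hpos : ∀ t : ℝ, 0 < t → 0 < φ t)
    (hmono : MonotoneOn φ (Set.Ici (0 : ℝ)))
    (hqc : AntitoneOn (fun t => φ t / t) (Set.Ioi (0 : ℝ)))
    (K : ℝ) (hK : 0 < K)
    (hΔ₂ : ∀ x : ℝ, 0 ≤ x → 2 * φ x ≤ φ (K * x)) :
    ∃ ε : ℝ, 0 < ε ∧ ∀ y : ℝ, 0 < y → y ≤ 1 → ∀ p : ℝ, 0 < p → p ≤ ε →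
      ∀ x : ℝ, 0 < x → φ (y * x) ≤ 2 * y ^ p * φ x :=
  quasiconcave_delta2_growth_general φ hpos hmono K hK hΔ₂
end

section
/- Let (Ω, μ) be a measure space, X and Y rearrangement-invariant Banach function spaces over Ω with φ_Y the fundamental function of Y, and (T_n) a sequence of linear operators on X. Define T(f) = sup_n |T_n(f)|. Suppose (1) there is a dense subset D ⊆ X such that for every f ∈ D, the sequence (T_n(f)(ω)) converges for μ-a.e. ω, and (2) there is β > 0 such that sup_{λ>0} λ·φ_Y(μ({ω : T(f)(ω) > λ})) ≤ β·‖f‖_X for all f ∈ X. Then for every f ∈ X, the sequence (T_n(f)(ω)) converges for μ-a.e. ω ∈ Ω. -/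
/-!
Write `u = v + w` with `v = (T_n g)` for `g ∈ D` close to `f`, and `w = (T_n (f - g))`. Since
`(v n ω)` converges a.e., an oscillation of `u` larger than `ε` forces `sup_n |w n ω| > ε / 4`
almost everywhere. The weak-type bound then gives `(ε / 4) φ_Y (μ S) ≤ β ‖f - g‖_X` for the set
`S` of such oscillations; letting `g → f` yields `φ_Y (μ S) = 0`, hence `μ S = 0`.
-/

open MeasureTheory Filter Topology
open scoped ENNReal

section Oscillation

variable {Ω : Type*}

/-- The set `{O_u > ε}` for the oscillation `O_u = limsup_{n,m} |u n - u m|`, up to its boundary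
`{O_u = ε}`. -/
def oscSet (u : ℕ → Ω → ℝ) (ε : ℝ) : Set Ω :=
  {ω | ∀ K : ℕ, ∃ n ≥ K, ∃ m ≥ K, ε < |u n ω - u m ω|}

lemma cauchySeq_of_forall_notMem_oscSet {u : ℕ → Ω → ℝ} {ω : Ω}
    (h : ∀ k : ℕ, ω ∉ oscSet u (1 / ((k : ℝ) + 1))) : CauchySeq (fun n => u n ω) := by
  rw [Metric.cauchySeq_iff]
  intro ε hε
  obtain ⟨k, hk⟩ := exists_nat_one_div_lt hε
  have hk' : ¬ ∀ K : ℕ, ∃ n ≥ K, ∃ m ≥ K, 1 / ((k : ℝ) + 1) < |u n ω - u m ω| := h k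
  push Not at hk'
  obtain ⟨K, hK⟩ := hk'
  exact ⟨K, fun n hn m hm => (Real.dist_eq _ _).symm ▸ (hK n hn m hm).trans_lt hk⟩

lemma ae_tendsto_of_measure_oscSet_eq_zero [MeasurableSpace Ω] {μ : Measure Ω}
    {u : ℕ → Ω → ℝ} (h : ∀ ε : ℝ, 0 < ε → μ (oscSet u ε) = 0) :
    ∀ᵐ ω ∂μ, ∃ L : ℝ, Tendsto (fun n => u n ω) atTop (𝓝 L) := by
  have hae : ∀ᵐ ω ∂μ, ∀ k : ℕ, ω ∉ oscSet u (1 / ((k : ℝ) + 1)) :=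
    ae_all_iff.2 fun k => measure_eq_zero_iff_ae_notMem.1 (h _ (by positivity))
  filter_upwards [hae] with ω hω
  exact cauchySeq_tendsto_of_complete (cauchySeq_of_forall_notMem_oscSet hω)

lemma exists_lt_abs_of_mem_oscSet {v w : ℕ → Ω → ℝ} {ε : ℝ} {ω : Ω}
    (hv : CauchySeq (fun n => v n ω)) (hε : 0 < ε)
    (hω : ω ∈ oscSet (fun n ω => v n ω + w n ω) ε) : ∃ n, ε / 4 < |w n ω| := by
  by_contra! hw
  obtain ⟨K, hK⟩ := Metric.cauchySeq_iff.1 hv (ε / 2) (by linarith)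
  obtain ⟨n, hn, m, hm, hlt⟩ := hω K
  have hvnm : |v n ω - v m ω| < ε / 2 := Real.dist_eq _ _ ▸ hK n hn m hm
  have hu : |v n ω + w n ω - (v m ω + w m ω)| ≤ |v n ω - v m ω| + |w n ω| + |w m ω| := by
    calc |v n ω + w n ω - (v m ω + w m ω)| = |(v n ω - v m ω) + w n ω + -w m ω| := by ring_nf
      _ ≤ |v n ω - v m ω| + |w n ω| + |-w m ω| := abs_add_three _ _ _
      _ = |v n ω - v m ω| + |w n ω| + |w m ω| := by rw [abs_neg]
  linarith [hw n, hw m]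

lemma measure_oscSet_le_of_ae_tendsto [MeasurableSpace Ω] {μ : Measure Ω}
    {v w : ℕ → Ω → ℝ} {ε : ℝ} (hε : 0 < ε)
    (hv : ∀ᵐ ω ∂μ, ∃ L : ℝ, Tendsto (fun n => v n ω) atTop (𝓝 L)) :
    μ (oscSet (fun n ω => v n ω + w n ω) ε) ≤
      μ {ω | ENNReal.ofReal (ε / 4) < ⨆ n, (‖w n ω‖₊ : ℝ≥0∞)} := by
  refine measure_mono_ae ?_
  filter_upwards [hv] with ω ⟨L, hL⟩ hω
  obtain ⟨n, hn⟩ := exists_lt_abs_of_mem_oscSet hL.cauchySeq hε hω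
  refine lt_iSup_iff.2 ⟨n, ?_⟩
  rw [← enorm_eq_nnnorm, Real.enorm_eq_ofReal_abs]
  exact (ENNReal.ofReal_lt_ofReal_iff_of_nonneg (by linarith)).2 hn

lemma ENNReal.eq_zero_of_forall_le_mul {c β : ℝ≥0∞} (hβ : β ≠ ⊤)
    (h : ∀ η : ℝ≥0∞, 0 < η → ∃ x < η, c ≤ β * x) : c = 0 := by
  by_contra hc
  obtain ⟨x, hx, hcx⟩ := h (c / β) (ENNReal.div_pos hc hβ)
  exact (hcx.trans_lt (mul_comm β x ▸ ENNReal.mul_lt_of_lt_div hx)).false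

end Oscillation

theorem banach_principle_riBFS_general
    {Ω : Type*} [MeasurableSpace Ω] (μ : Measure Ω)
    (X : Set (Ω → ℝ)) (N : (Ω → ℝ) → ℝ≥0∞)
    (Tn : ℕ → (Ω → ℝ) → (Ω → ℝ))
    (hadd : ∀ n f g, Tn n (f + g) = fun ω => Tn n f ω + Tn n g ω)
    (φY : ℝ≥0∞ → ℝ≥0∞)
    (hposY : ∀ t : ℝ≥0∞, 0 < t → 0 < φY t)
    (hmonoY : Monotone φY)
    (D : Set (Ω → ℝ))
    (hXsub : ∀ f ∈ X, ∀ g ∈ D, f - g ∈ X)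
    (hdense : ∀ f ∈ X, ∀ ε : ℝ≥0∞, 0 < ε → ∃ g ∈ D, N (f - g) < ε)
    (hDconv : ∀ f ∈ D, ∀ᵐ ω ∂μ, ∃ L : ℝ, Filter.Tendsto (fun n => Tn n f ω)
      Filter.atTop (nhds L))
    (β : ℝ≥0∞) (hβfin : β < ⊤)
    (hweak : ∀ f ∈ X, ∀ lam : ℝ, 0 < lam →
      ENNReal.ofReal lam *
        φY (μ {ω | ENNReal.ofReal lam < ⨆ n, (‖Tn n f ω‖₊ : ℝ≥0∞)}) ≤ β * N f) :
    ∀ f ∈ X, ∀ᵐ ω ∂μ, ∃ L : ℝ, Filter.Tendsto (fun n => Tn n f ω)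
      Filter.atTop (nhds L) := by
  intro f hf
  refine ae_tendsto_of_measure_oscSet_eq_zero fun ε hε => ?_
  have hbound : ∀ g ∈ D,
      ENNReal.ofReal (ε / 4) * φY (μ (oscSet (fun n => Tn n f) ε)) ≤ β * N (f - g) := by
    intro g hg
    have hsplit : (fun n => Tn n f) = fun n ω => Tn n g ω + Tn n (f - g) ω := by
      funext n ω
      rw [← congrFun (hadd n g (f - g)) ω, add_sub_cancel]
    rw [hsplit]
    refine le_trans ?_ (hweak _ (hXsub f hf g hg) (ε / 4) (by positivity))
    exact mul_le_mul_right (hmonoY (measure_oscSet_le_of_ae_tendsto hε (hDconv g hg))) _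
  have hzero := ENNReal.eq_zero_of_forall_le_mul hβfin.ne fun η hη => by
    obtain ⟨g, hg, hgη⟩ := hdense f hf η hη
    exact ⟨N (f - g), hgη, hbound g hg⟩
  rw [mul_eq_zero, ENNReal.ofReal_eq_zero] at hzero
  refine hzero.elim (fun h => absurd h (by linarith)) fun h => ?_
  by_contra hne
  exact (hposY _ (pos_iff_ne_zero.2 hne)).ne' h

/-- Banach principle for r.i. BFSs: if the linear operators `T_n` converge a.e. on a
dense subset `D` of `X`, and the maximal operator `T f = sup_n |T_n f|` is of weak
type `(X,Y)` (with fundamental function `φ_Y`), then `(T_n f)` converges a.e. for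
every `f ∈ X`. -/
theorem banach_principle_riBFS
    {Ω : Type*} [MeasurableSpace Ω] (μ : Measure Ω)
    (X : Set (Ω → ℝ)) (N : (Ω → ℝ) → ℝ≥0∞)
    (Tn : ℕ → (Ω → ℝ) → (Ω → ℝ))
    (hadd : ∀ n f g, Tn n (f + g) = fun ω => Tn n f ω + Tn n g ω)
    (hsmul : ∀ n (c : ℝ) f, Tn n (c • f) = fun ω => c * Tn n f ω)
    (hmeas : ∀ n f, f ∈ X → Measurable (Tn n f))
    (φY : ℝ≥0∞ → ℝ≥0∞)
    (h0 : φY 0 = 0)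
    (hposY : ∀ t : ℝ≥0∞, 0 < t → 0 < φY t)
    (hmonoY : Monotone φY)
    (hqcY : AntitoneOn (fun t => φY t / t) (Set.Ioi (0 : ℝ≥0∞)))
    (D : Set (Ω → ℝ)) (hDX : D ⊆ X)
    (hXsub : ∀ f ∈ X, ∀ g ∈ D, f - g ∈ X)
    (hdense : ∀ f ∈ X, ∀ ε : ℝ≥0∞, 0 < ε → ∃ g ∈ D, N (f - g) < ε)
    (hDconv : ∀ f ∈ D, ∀ᵐ ω ∂μ, ∃ L : ℝ, Filter.Tendsto (fun n => Tn n f ω)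
      Filter.atTop (nhds L))
    (β : ℝ≥0∞) (hβ : 0 < β) (hβfin : β < ⊤)
    (hweak : ∀ f ∈ X, ∀ lam : ℝ, 0 < lam →
      ENNReal.ofReal lam *
        φY (μ {ω | ENNReal.ofReal lam < ⨆ n, (‖Tn n f ω‖₊ : ℝ≥0∞)}) ≤ β * N f) :
    ∀ f ∈ X, ∀ᵐ ω ∂μ, ∃ L : ℝ, Filter.Tendsto (fun n => Tn n f ω)
      Filter.atTop (nhds L) :=
  banach_principle_riBFS_general μ X N Tn hadd φY hposY hmonoY D hXsub hdense hDconv β hβfin hweak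
end

section
/- Let Φ be a Young's function satisfying the Δ' condition: Φ(st) ≤ c₀·Φ(s)·Φ(t) for all s, t ≥ 0 and some c₀ > 0, with Φ(t) > 0 for all t > 0, and let φ(t) = 1/Φ⁻¹(1/t) be the associated fundamental function. Then for every measurable g on a measure space with 0 < ∫ Φ(|g|) dμ < ∞, the Luxemburg norm satisfies ‖g‖_{L^Φ} ≤ φ(c₀·∫ Φ(|g|) dμ). -/
open MeasureTheory
open scoped ENNReal NNReal

/-- The Luxemburg norm of `f` in the Orlicz space determined by `Φ`. -/
noncomputable def luxemburgNorm {Ω : Type*} [MeasurableSpace Ω] (μ : Measure Ω)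
    (Φ : ℝ → ℝ) (f : Ω → ℝ) : ℝ≥0∞ :=
  sInf {r : ℝ≥0∞ | ∃ k : ℝ, 0 < k ∧ r = ENNReal.ofReal k⁻¹ ∧
    ∫⁻ x, ENNReal.ofReal (Φ (k * |f x|)) ∂μ ≤ 1}

/-!
With `M = c₀ ∫ Φ(|g|) dμ` and `k = Φ⁻¹(1/M)`, the `Δ'` condition gives
`∫ Φ(k|g|) dμ ≤ c₀ Φ(k) ∫ Φ(|g|) dμ = 1`, so `1/k = φ(M)` is admissible in the
infimum defining the Luxemburg norm.
-/

section

variable {Ω : Type*} [MeasurableSpace Ω] {μ : Measure Ω} {Φ : ℝ → ℝ} {f : Ω → ℝ}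

theorem luxemburgNorm_le_of_lintegral_le_one {k : ℝ} (hk : 0 < k)
    (hint : ∫⁻ x, ENNReal.ofReal (Φ (k * |f x|)) ∂μ ≤ 1) :
    luxemburgNorm μ Φ f ≤ ENNReal.ofReal k⁻¹ :=
  sInf_le ⟨k, hk, rfl, hint⟩

theorem lintegral_ofReal_comp_mul_abs_le {c₀ k : ℝ} (hk : 0 ≤ k) (hck : 0 ≤ c₀ * Φ k)
    (hΔ' : ∀ s t : ℝ, 0 ≤ s → 0 ≤ t → Φ (s * t) ≤ c₀ * Φ s * Φ t) :
    ∫⁻ x, ENNReal.ofReal (Φ (k * |f x|)) ∂μ ≤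
      ENNReal.ofReal (c₀ * Φ k) * ∫⁻ x, ENNReal.ofReal (Φ |f x|) ∂μ := by
  calc ∫⁻ x, ENNReal.ofReal (Φ (k * |f x|)) ∂μ
      ≤ ∫⁻ x, ENNReal.ofReal (c₀ * Φ k) * ENNReal.ofReal (Φ |f x|) ∂μ := by
        refine lintegral_mono fun x => ?_
        rw [← ENNReal.ofReal_mul hck]
        exact ENNReal.ofReal_le_ofReal (hΔ' k |f x| hk (abs_nonneg _))
    _ = ENNReal.ofReal (c₀ * Φ k) * ∫⁻ x, ENNReal.ofReal (Φ |f x|) ∂μ :=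
        lintegral_const_mul' _ _ ENNReal.ofReal_ne_top

end

theorem pos_of_rightInverse_of_map_zero {Φ Φinv : ℝ → ℝ} (hΦ0 : Φ 0 = 0)
    (hinv_nonneg : ∀ t : ℝ, 0 ≤ t → 0 ≤ Φinv t)
    (hleft : ∀ t : ℝ, 0 ≤ t → Φ (Φinv t) = t) {t : ℝ} (ht : 0 < t) :
    0 < Φinv t := by
  refine (hinv_nonneg t ht.le).lt_of_ne fun h => ht.ne ?_
  rw [← hleft t ht.le, ← h, hΦ0]

theorem luxemburg_norm_le_fundamental_of_deltaPrime_general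
    {Ω : Type*} [MeasurableSpace Ω] (μ : Measure Ω)
    (Φ Φinv : ℝ → ℝ)
    (hΦ0 : Φ 0 = 0)
    (hinv_nonneg : ∀ t : ℝ, 0 ≤ t → 0 ≤ Φinv t)
    (hleft : ∀ t : ℝ, 0 ≤ t → Φ (Φinv t) = t)
    (c₀ : ℝ) (hc₀ : 0 < c₀)
    (hΔ' : ∀ s t : ℝ, 0 ≤ s → 0 ≤ t → Φ (s * t) ≤ c₀ * Φ s * Φ t)
    (g : Ω → ℝ)
    (hpos : 0 < ∫⁻ x, ENNReal.ofReal (Φ |g x|) ∂μ)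
    (hfin : ∫⁻ x, ENNReal.ofReal (Φ |g x|) ∂μ < ⊤) :
    luxemburgNorm μ Φ g ≤
      ENNReal.ofReal
        (1 / Φinv (1 / (c₀ * (∫⁻ x, ENNReal.ofReal (Φ |g x|) ∂μ).toReal))) := by
  set J := ∫⁻ x, ENNReal.ofReal (Φ |g x|) ∂μ
  have hJ : 0 < J.toReal := ENNReal.toReal_pos hpos.ne' hfin.ne
  have hM : 0 < 1 / (c₀ * J.toReal) := by positivity
  set k := Φinv (1 / (c₀ * J.toReal))
  have hck : c₀ * Φ k = J.toReal⁻¹ := by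
    rw [hleft _ hM.le]
    field_simp
  rw [one_div k]
  refine luxemburgNorm_le_of_lintegral_le_one
    (pos_of_rightInverse_of_map_zero hΦ0 hinv_nonneg hleft hM) ?_
  calc ∫⁻ x, ENNReal.ofReal (Φ (k * |g x|)) ∂μ
      ≤ ENNReal.ofReal (c₀ * Φ k) * J :=
        lintegral_ofReal_comp_mul_abs_le (hinv_nonneg _ hM.le) (hck ▸ by positivity) hΔ'
    _ = 1 := by
        rw [hck, ENNReal.ofReal_inv_of_pos hJ, ENNReal.ofReal_toReal hfin.ne,
          ENNReal.inv_mul_cancel hpos.ne' hfin.ne]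

/-- For a Young's function `Φ` satisfying the `Δ'` condition
`Φ(st) ≤ c₀·Φ(s)·Φ(t)` and with inverse `Φ⁻¹`, every measurable `g` with
`0 < ∫ Φ(|g|) dμ < ∞` satisfies `‖g‖_{L^Φ} ≤ φ(c₀·∫Φ(|g|)dμ)`, where the fundamental
function is `φ(t) = 1/Φ⁻¹(1/t)`. -/
theorem luxemburg_norm_le_fundamental_of_deltaPrime
    {Ω : Type*} [MeasurableSpace Ω] (μ : Measure Ω)
    (Φ Φinv : ℝ → ℝ)
    (hΦ0 : Φ 0 = 0)
    (hΦpos : ∀ t : ℝ, 0 < t → 0 < Φ t)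
    (hΦmono : MonotoneOn Φ (Set.Ici (0 : ℝ)))
    (hΦconv : ConvexOn ℝ (Set.Ici (0 : ℝ)) Φ)
    (hinv_nonneg : ∀ t : ℝ, 0 ≤ t → 0 ≤ Φinv t)
    (hleft : ∀ t : ℝ, 0 ≤ t → Φ (Φinv t) = t)
    (hright : ∀ t : ℝ, 0 ≤ t → Φinv (Φ t) = t)
    (c₀ : ℝ) (hc₀ : 0 < c₀)
    (hΔ' : ∀ s t : ℝ, 0 ≤ s → 0 ≤ t → Φ (s * t) ≤ c₀ * Φ s * Φ t)
    (g : Ω → ℝ) (hg : Measurable g)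
    (hpos : 0 < ∫⁻ x, ENNReal.ofReal (Φ |g x|) ∂μ)
    (hfin : ∫⁻ x, ENNReal.ofReal (Φ |g x|) ∂μ < ⊤) :
    luxemburgNorm μ Φ g ≤
      ENNReal.ofReal
        (1 / Φinv (1 / (c₀ * (∫⁻ x, ENNReal.ofReal (Φ |g x|) ∂μ).toReal))) :=
  luxemburg_norm_le_fundamental_of_deltaPrime_general μ Φ Φinv hΦ0 hinv_nonneg hleft c₀ hc₀ hΔ' g
    hpos hfin
end

section
/- Let G be an abelian σ-compact locally compact group acting measure-preservingly on a σ-finite measure space (Ω, μ), with the induced action on L¹(Ω) point-norm continuous. Let Φ be a Young's function satisfying Δ₂ globally with Φ(t) > 0 for t > 0, let E ⊆ Ω have finite measure, and let (V_m) be a decreasing sequence of compact neighborhoods of the identity with sup_{t ∈ V_m} ‖α_t(χ_E) − χ_E‖_{L¹} ≤ 1/m. Set ψ_m = (1/h(V_m))·χ_{V_m} and α_{ψ_m}(χ_E)(ω) = ∫_G χ_E(α_t(ω))·ψ_m(t) dt. Then ∫_Ω Φ(|α_{ψ_m}(χ_E) − χ_E|) dμ ≤ Φ(1)/m, and hence α_{ψ_m}(χ_E)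 → χ_E in the Luxemburg norm of L^Φ(Ω). -/
/-!
Write `D ω = ∫ |χ_E (α_t ω) - χ_E ω| dρ(t)` for the averaging probability measure `ρ = ν[|V_m]`.
Since `χ_E` takes values in `[0, 1]`, so does `D`, and then `|α_ρ χ_E - χ_E| ≤ D`, monotonicity,
and convexity with `Φ 0 = 0` give `Φ |α_ρ χ_E - χ_E| ≤ Φ (D) ≤ Φ 1 * D`. By Tonelli,
`∫ D dμ = ∫ ‖α_t χ_E - χ_E‖₁ dρ(t) ≤ 1 / m`, which is the modular bound. Under `Δ₂` the modular
of `2 ^ j • F` is at most `C ^ j` times that of `F`, so modular convergence to `0` forces the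
Luxemburg norm below `2⁻¹ ^ j` eventually, for every `j`.
-/

open MeasureTheory Filter
open scoped ENNReal NNReal

open ProbabilityTheory

section Young

variable {Φ : ℝ → ℝ}

theorem ConvexOn.apply_le_mul_apply_one (hΦconv : ConvexOn ℝ (Set.Ici 0) Φ) (hΦ0 : Φ 0 = 0)
    {x : ℝ} (hx0 : 0 ≤ x) (hx1 : x ≤ 1) : Φ x ≤ x * Φ 1 := by
  simpa [hΦ0] using hΦconv.2 (Set.mem_Ici.2 zero_le_one) (Set.mem_Ici.2 le_rfl) hx0
    (sub_nonneg.2 hx1) (add_sub_cancel x 1)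

theorem apply_two_pow_mul_le {C : ℝ} (hC : 0 ≤ C)
    (hΔ₂ : ∀ t : ℝ, 0 ≤ t → Φ (2 * t) ≤ C * Φ t) (j : ℕ) {t : ℝ} (ht : 0 ≤ t) :
    Φ (2 ^ j * t) ≤ C ^ j * Φ t := by
  induction j with
  | zero => simp
  | succ n ih =>
    calc Φ (2 ^ (n + 1) * t) = Φ (2 * (2 ^ n * t)) := by ring_nf
      _ ≤ C * Φ (2 ^ n * t) := hΔ₂ _ (by positivity)
      _ ≤ C * (C ^ n * Φ t) := mul_le_mul_of_nonneg_left ih hC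
      _ = C ^ (n + 1) * Φ t := by ring

variable {Ω : Type*} [MeasurableSpace Ω] {μ : Measure Ω}

theorem luxemburgNorm_le_ofReal_inv {f : Ω → ℝ} {k : ℝ} (hk : 0 < k)
    (h : ∫⁻ x, ENNReal.ofReal (Φ (k * |f x|)) ∂μ ≤ 1) :
    luxemburgNorm μ Φ f ≤ ENNReal.ofReal k⁻¹ :=
  sInf_le ⟨k, hk, rfl, h⟩

theorem tendsto_luxemburgNorm_zero_of_tendsto_lintegral {ι : Type*} {l : Filter ι}
    {F : ι → Ω → ℝ} {C : ℝ} (hC : 0 ≤ C) (hΔ₂ : ∀ t : ℝ, 0 ≤ t → Φ (2 * t) ≤ C * Φ t)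
    (hF : Tendsto (fun i => ∫⁻ x, ENNReal.ofReal (Φ |F i x|) ∂μ) l (nhds 0)) :
    Tendsto (fun i => luxemburgNorm μ Φ (F i)) l (nhds 0) := by
  rw [ENNReal.tendsto_nhds_zero]
  intro ε hε
  obtain ⟨j, hj⟩ := ENNReal.exists_inv_two_pow_lt hε.ne'
  have hCj : 0 < (ENNReal.ofReal (C ^ j))⁻¹ := ENNReal.inv_pos.2 ENNReal.ofReal_ne_top
  filter_upwards [hF.eventually (gt_mem_nhds hCj)] with i hi
  have hmod : ∫⁻ x, ENNReal.ofReal (Φ (2 ^ j * |F i x|)) ∂μ ≤ 1 := calc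
    _ ≤ ∫⁻ x, ENNReal.ofReal (C ^ j) * ENNReal.ofReal (Φ |F i x|) ∂μ :=
        lintegral_mono fun x => by
          rw [← ENNReal.ofReal_mul (by positivity)]
          exact ENNReal.ofReal_le_ofReal (apply_two_pow_mul_le hC hΔ₂ j (abs_nonneg _))
    _ = ENNReal.ofReal (C ^ j) * ∫⁻ x, ENNReal.ofReal (Φ |F i x|) ∂μ :=
        lintegral_const_mul' _ _ ENNReal.ofReal_ne_top
    _ ≤ ENNReal.ofReal (C ^ j) * (ENNReal.ofReal (C ^ j))⁻¹ := by gcongr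
    _ ≤ 1 := ENNReal.mul_inv_le_one _
  calc luxemburgNorm μ Φ (F i) ≤ ENNReal.ofReal (2 ^ j)⁻¹ :=
        luxemburgNorm_le_ofReal_inv (by positivity) hmod
    _ = 2⁻¹ ^ j := by
        rw [ENNReal.ofReal_inv_of_pos (by positivity), ENNReal.ofReal_pow zero_le_two,
          ENNReal.ofReal_ofNat, ENNReal.inv_pow]
    _ ≤ ε := hj.le

end Young

section Averaging

variable {Ω G : Type*} [MeasurableSpace G] {ρ : Measure G} {α : G → Ω → Ω} {f : Ω → ℝ}

/-- For `ρ = ν[|V]` this is the paper's `α_ψ(f)` with `ψ = χ_V / ν V`. -/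
noncomputable def actionAverage (ρ : Measure G) (α : G → Ω → Ω) (f : Ω → ℝ) (ω : Ω) : ℝ :=
  ∫ t, f (α t ω) ∂ρ

theorem abs_actionAverage_sub_le [IsProbabilityMeasure ρ] {ω : Ω}
    (hint : Integrable (fun t => f (α t ω)) ρ) :
    |actionAverage ρ α f ω - f ω| ≤ ∫ t, |f (α t ω) - f ω| ∂ρ := by
  have hsub : actionAverage ρ α f ω - f ω = ∫ t, (f (α t ω) - f ω) ∂ρ := by
    simp [actionAverage, integral_sub hint (integrable_const _)]
  rw [hsub]
  exact abs_integral_le_integral_abs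

theorem actionAverage_cond (ν : Measure G) (s : Set G) (ω : Ω) :
    actionAverage ν[|s] α f ω = (ν s).toReal⁻¹ * ∫ t in s, f (α t ω) ∂ν := by
  simp only [actionAverage, ProbabilityTheory.cond, integral_smul_measure, ENNReal.toReal_inv,
    smul_eq_mul]

variable [MeasurableSpace Ω] {μ : Measure Ω}

theorem integrable_comp_action [IsFiniteMeasure ρ] (hf : Measurable f)
    (hf01 : ∀ x, f x ∈ Set.Icc (0 : ℝ) 1) (hα : Measurable fun p : Ω × G => α p.2 p.1) (ω : Ω) :
    Integrable (fun t => f (α t ω)) ρ :=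
  Integrable.of_bound (hf.comp (hα.comp measurable_prodMk_left)).aestronglyMeasurable 1
    (Eventually.of_forall fun _ => by
      rw [Real.norm_of_nonneg (hf01 _).1]; exact (hf01 _).2)

theorem integral_abs_comp_action_sub_le_one [IsProbabilityMeasure ρ] (hf : Measurable f)
    (hf01 : ∀ x, f x ∈ Set.Icc (0 : ℝ) 1) (hα : Measurable fun p : Ω × G => α p.2 p.1) (ω : Ω) :
    ∫ t, |f (α t ω) - f ω| ∂ρ ≤ 1 := by
  calc ∫ t, |f (α t ω) - f ω| ∂ρ ≤ ∫ _t, (1 : ℝ) ∂ρ :=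
        integral_mono ((integrable_comp_action hf hf01 hα ω).sub (integrable_const _)).abs
          (integrable_const _) fun _ => by
            simpa using abs_sub_le_of_le_of_le (hf01 _).1 (hf01 _).2 (hf01 ω).1 (hf01 ω).2
    _ = 1 := by simp

theorem lintegral_ofReal_integral_abs_comp_action_sub_le [IsProbabilityMeasure ρ] [SFinite μ]
    (hf : Measurable f) (hf01 : ∀ x, f x ∈ Set.Icc (0 : ℝ) 1)
    (hα : Measurable fun p : Ω × G => α p.2 p.1) {δ : ℝ≥0∞}
    (hδ : ∀ᵐ t ∂ρ, ∫⁻ ω, ‖f (α t ω) - f ω‖ₑ ∂μ ≤ δ) :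
    ∫⁻ ω, ENNReal.ofReal (∫ t, |f (α t ω) - f ω| ∂ρ) ∂μ ≤ δ := by
  calc ∫⁻ ω, ENNReal.ofReal (∫ t, |f (α t ω) - f ω| ∂ρ) ∂μ
      = ∫⁻ ω, ∫⁻ t, ‖f (α t ω) - f ω‖ₑ ∂ρ ∂μ := lintegral_congr fun ω => by
        have hint : Integrable (fun t => |f (α t ω) - f ω|) ρ :=
          ((integrable_comp_action hf hf01 hα ω).sub (integrable_const _)).abs
        rw [ofReal_integral_eq_lintegral_ofReal hint (Eventually.of_forall fun _ => abs_nonneg _)]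
        simp only [Real.enorm_eq_ofReal_abs]
    _ = ∫⁻ t, ∫⁻ ω, ‖f (α t ω) - f ω‖ₑ ∂μ ∂ρ :=
        lintegral_lintegral_swap ((hf.comp hα).sub (hf.comp measurable_fst)).enorm.aemeasurable
    _ ≤ ∫⁻ _t, δ ∂ρ := lintegral_mono_ae hδ
    _ = δ := by simp

theorem lintegral_ofReal_abs_actionAverage_sub_le [IsProbabilityMeasure ρ] [SFinite μ]
    {Φ : ℝ → ℝ} (hΦ0 : Φ 0 = 0) (hΦconv : ConvexOn ℝ (Set.Ici 0) Φ)
    (hΦmono : MonotoneOn Φ (Set.Ici 0))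
    (hf : Measurable f) (hf01 : ∀ x, f x ∈ Set.Icc (0 : ℝ) 1)
    (hα : Measurable fun p : Ω × G => α p.2 p.1) {δ : ℝ≥0∞}
    (hδ : ∀ᵐ t ∂ρ, ∫⁻ ω, ‖f (α t ω) - f ω‖ₑ ∂μ ≤ δ) :
    ∫⁻ ω, ENNReal.ofReal (Φ |actionAverage ρ α f ω - f ω|) ∂μ ≤ δ * ENNReal.ofReal (Φ 1) := by
  set D : Ω → ℝ := fun ω => ∫ t, |f (α t ω) - f ω| ∂ρ
  have hD0 (ω : Ω) : 0 ≤ D ω := integral_nonneg fun _ => abs_nonneg _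
  have hΦD (ω : Ω) : Φ |actionAverage ρ α f ω - f ω| ≤ D ω * Φ 1 :=
    (hΦmono (Set.mem_Ici.2 (abs_nonneg _)) (Set.mem_Ici.2 (hD0 ω))
      (abs_actionAverage_sub_le (integrable_comp_action hf hf01 hα ω))).trans
      (hΦconv.apply_le_mul_apply_one hΦ0 (hD0 ω)
        (integral_abs_comp_action_sub_le_one hf hf01 hα ω))
  calc ∫⁻ ω, ENNReal.ofReal (Φ |actionAverage ρ α f ω - f ω|) ∂μ
      ≤ ∫⁻ ω, ENNReal.ofReal (D ω) * ENNReal.ofReal (Φ 1) ∂μ := lintegral_mono fun ω => by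
        rw [← ENNReal.ofReal_mul (hD0 ω)]
        exact ENNReal.ofReal_le_ofReal (hΦD ω)
    _ = (∫⁻ ω, ENNReal.ofReal (D ω) ∂μ) * ENNReal.ofReal (Φ 1) :=
        lintegral_mul_const' _ _ ENNReal.ofReal_ne_top
    _ ≤ δ * ENNReal.ofReal (Φ 1) := by
        gcongr
        exact lintegral_ofReal_integral_abs_comp_action_sub_le hf hf01 hα hδ

end Averaging

theorem average_indicator_modular_convergence_general
    {Ω G : Type*} [MeasurableSpace Ω] [MeasurableSpace G]
    (μ : Measure Ω) [SigmaFinite μ] (ν : Measure G)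
    (α : G → Ω → Ω)
    (hjm : Measurable (fun p : Ω × G => α p.2 p.1))
    (Φ : ℝ → ℝ)
    (hΦ0 : Φ 0 = 0)
    (hΦconv : ConvexOn ℝ (Set.Ici (0 : ℝ)) Φ)
    (hΦmono : MonotoneOn Φ (Set.Ici (0 : ℝ)))
    (C : ℝ) (hC : 0 < C) (hΔ₂ : ∀ t : ℝ, 0 ≤ t → Φ (2 * t) ≤ C * Φ t)
    (E : Set Ω) (hE : MeasurableSet E)
    (V : ℕ → Set G)
    (hVmeas : ∀ m, MeasurableSet (V m))
    (hVpos : ∀ m, 0 < ν (V m)) (hVfin : ∀ m, ν (V m) < ⊤)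
    (happrox : ∀ m : ℕ, 1 ≤ m → ∀ t ∈ V m,
      ∫⁻ ω, (‖Set.indicator E (fun _ => (1 : ℝ)) (α t ω) -
        Set.indicator E (fun _ => (1 : ℝ)) ω‖₊ : ℝ≥0∞) ∂μ ≤
          ENNReal.ofReal (1 / m)) :
    (∀ m : ℕ, 1 ≤ m →
      ∫⁻ ω, ENNReal.ofReal (Φ
        |(ν (V m)).toReal⁻¹ *
            (∫ t in V m, Set.indicator E (fun _ => (1 : ℝ)) (α t ω) ∂ν) -
          Set.indicator E (fun _ => (1 : ℝ)) ω|) ∂μ ≤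
        ENNReal.ofReal (Φ 1 / m)) ∧
    Tendsto (fun m : ℕ =>
      luxemburgNorm μ Φ (fun ω =>
        (ν (V m)).toReal⁻¹ *
            (∫ t in V m, Set.indicator E (fun _ => (1 : ℝ)) (α t ω) ∂ν) -
          Set.indicator E (fun _ => (1 : ℝ)) ω))
      atTop (nhds 0) := by
  set χ : Ω → ℝ := E.indicator fun _ => 1
  have hχ01 (x : Ω) : χ x ∈ Set.Icc (0 : ℝ) 1 := by
    by_cases hx : x ∈ E <;> simp [χ, hx]
  have hmod (m : ℕ) (hm : 1 ≤ m) : ∫⁻ ω, ENNReal.ofReal (Φ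
      |(ν (V m)).toReal⁻¹ * (∫ t in V m, χ (α t ω) ∂ν) - χ ω|) ∂μ ≤
      ENNReal.ofReal (Φ 1 / m) := by
    have := cond_isProbabilityMeasure_of_finite (hVpos m).ne' (hVfin m).ne
    have hδ : ∀ᵐ t ∂ν[|V m], ∫⁻ ω, ‖χ (α t ω) - χ ω‖ₑ ∂μ ≤ ENNReal.ofReal (1 / m) :=
      Measure.ae_smul_measure (ae_restrict_of_forall_mem (hVmeas m) (happrox m hm)) _
    simp_rw [← actionAverage_cond]
    calc _ ≤ ENNReal.ofReal (1 / m) * ENNReal.ofReal (Φ 1) :=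
          lintegral_ofReal_abs_actionAverage_sub_le hΦ0 hΦconv hΦmono
            (measurable_const.indicator hE) hχ01 hjm hδ
      _ = ENNReal.ofReal (Φ 1 / m) := by
          rw [← ENNReal.ofReal_mul (by positivity), one_div_mul_eq_div]
  refine ⟨hmod, tendsto_luxemburgNorm_zero_of_tendsto_lintegral hC.le hΔ₂ ?_⟩
  have hbound : Tendsto (fun m : ℕ => ENNReal.ofReal (Φ 1 / m)) atTop (nhds 0) := by
    simpa using ENNReal.tendsto_ofReal (tendsto_const_div_atTop_nhds_zero_nat (Φ 1))
  exact tendsto_of_tendsto_of_tendsto_of_le_of_le' tendsto_const_nhds hbound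
    (Eventually.of_forall fun _ => zero_le) ((eventually_ge_atTop 1).mono hmod)

/-- Averaging `χ_E` over shrinking neighbourhoods `V_m`: the modular distance to `χ_E`
is at most `Φ(1)/m`, and hence `α_{ψ_m}(χ_E) → χ_E` in the Luxemburg norm of `L^Φ`. -/
theorem average_indicator_modular_convergence
    {Ω G : Type*} [MeasurableSpace Ω] [MeasurableSpace G]
    [CommGroup G] [TopologicalSpace G] [IsTopologicalGroup G]
    [LocallyCompactSpace G] [SigmaCompactSpace G]
    (μ : Measure Ω) [SigmaFinite μ] (ν : Measure G) [SigmaFinite ν]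
    (α : G → Ω → Ω)
    (hmp : ∀ t : G, MeasurePreserving (α t) μ μ)
    (hjm : Measurable (fun p : Ω × G => α p.2 p.1))
    (hcont : ∀ g : Ω → ℝ, Integrable g μ →
      Tendsto (fun t : G => ∫⁻ ω, (‖g (α t ω) - g ω‖₊ : ℝ≥0∞) ∂μ)
        (nhds 1) (nhds 0))
    (Φ : ℝ → ℝ)
    (hΦ0 : Φ 0 = 0)
    (hΦpos : ∀ t : ℝ, 0 < t → 0 < Φ t)
    (hΦconv : ConvexOn ℝ (Set.Ici (0 : ℝ)) Φ)
    (hΦmono : MonotoneOn Φ (Set.Ici (0 : ℝ)))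
    (C : ℝ) (hC : 0 < C) (hΔ₂ : ∀ t : ℝ, 0 ≤ t → Φ (2 * t) ≤ C * Φ t)
    (E : Set Ω) (hE : MeasurableSet E) (hEfin : μ E < ⊤)
    (V : ℕ → Set G)
    (hVmeas : ∀ m, MeasurableSet (V m))
    (hVcpt : ∀ m, IsCompact (V m))
    (hVnbhd : ∀ m, V m ∈ nhds (1 : G))
    (hVdec : Antitone V)
    (hVpos : ∀ m, 0 < ν (V m)) (hVfin : ∀ m, ν (V m) < ⊤)
    (happrox : ∀ m : ℕ, 1 ≤ m → ∀ t ∈ V m,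
      ∫⁻ ω, (‖Set.indicator E (fun _ => (1 : ℝ)) (α t ω) -
        Set.indicator E (fun _ => (1 : ℝ)) ω‖₊ : ℝ≥0∞) ∂μ ≤
          ENNReal.ofReal (1 / m)) :
    (∀ m : ℕ, 1 ≤ m →
      ∫⁻ ω, ENNReal.ofReal (Φ
        |(ν (V m)).toReal⁻¹ *
            (∫ t in V m, Set.indicator E (fun _ => (1 : ℝ)) (α t ω) ∂ν) -
          Set.indicator E (fun _ => (1 : ℝ)) ω|) ∂μ ≤
        ENNReal.ofReal (Φ 1 / m)) ∧
    Tendsto (fun m : ℕ =>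
      luxemburgNorm μ Φ (fun ω =>
        (ν (V m)).toReal⁻¹ *
            (∫ t in V m, Set.indicator E (fun _ => (1 : ℝ)) (α t ω) ∂ν) -
          Set.indicator E (fun _ => (1 : ℝ)) ω))
      atTop (nhds 0) :=
  average_indicator_modular_convergence_general μ ν α hjm Φ hΦ0 hΦconv hΦmono C hC hΔ₂ E hE V hVmeas
    hVpos hVfin happrox
end

section
/- Let (Ω, μ) be a σ-finite measure space, G a σ-compact locally compact group acting measure-preservingly on Ω, T a transferable operator which is semilocal with neighborhood U (if supp(f) ⊆ V then supp(T f) ⊆ VU) and right-translation invariant, and suppose T commutes appropriately with the action. For f ∈ L¹(Ω) + L^∞(Ω), set F(ω, t) = f(α_t(ω)) and F'(ω, t) = T(F_ω)(t). Then for all s, t ∈ G and almost all ω ∈ Ω, F'(α_s(ω), t) = F'(ω, ts); consequently, for any t₁, t₂ ∈ G, the functions ω ↦ F'(ω, t₁) and ω ↦ F'(ω, t₂) are equimeasurable on (Ω, μ). -/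
open MeasureTheory ProbabilityTheory
open scoped ENNReal Pointwise

theorem ProbabilityTheory.IdentDistrib.comp_measurePreserving
    {Ω β : Type*} [MeasurableSpace Ω] [MeasurableSpace β] {μ : Measure Ω} {φ : Ω → Ω}
    (hφ : MeasurePreserving φ μ μ) {g : Ω → β} (hg : Measurable g) :
    IdentDistrib (g ∘ φ) g μ μ where
  aemeasurable_fst := (hg.comp hφ.measurable).aemeasurable
  aemeasurable_snd := hg.aemeasurable
  map_eq := by rw [← Measure.map_map hg hφ.measurable, hφ.map_eq]

theorem transfer_apply_action {Ω G β γ : Type*} [Mul G]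
    (α : G → Ω → Ω) (haction : ∀ (t s : G) (ω : Ω), α t (α s ω) = α (t * s) ω)
    (T : (G → β) → (G → γ))
    (htrans : ∀ (g : G → β) (t : G), T (fun s => g (s * t)) = fun s => T g (s * t))
    (f : Ω → β) (s : G) (ω : Ω) (t : G) :
    T (fun u => f (α u (α s ω))) t = T (fun u => f (α u ω)) (t * s) := by
  simp only [haction]
  exact congrFun (htrans (fun v => f (α v ω)) s) t

theorem identDistrib_of_apply_action {Ω G β : Type*} [MeasurableSpace Ω] [MeasurableSpace β]
    [Group G] {μ : Measure Ω} {α : G → Ω → Ω} (hmp : ∀ t : G, MeasurePreserving (α t) μ μ)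
    {F : Ω → G → β} (hF : ∀ s ω t, F (α s ω) t = F ω (t * s))
    (hmeas : ∀ t, Measurable (F · t)) (t₁ t₂ : G) :
    IdentDistrib (F · t₂) (F · t₁) μ μ := by
  have hcomp : (F · t₂) = (F · t₁) ∘ α (t₁⁻¹ * t₂) := by
    funext ω
    simp only [Function.comp_apply, hF, mul_inv_cancel_left]
  rw [hcomp]
  exact .comp_measurePreserving (hmp _) (hmeas t₁)

theorem transferred_equimeasurable_general
    {Ω G : Type*} [MeasurableSpace Ω] [Group G]
    (μ : Measure Ω)
    (α : G → Ω → Ω)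
    (hmp : ∀ t : G, MeasurePreserving (α t) μ μ)
    (haction : ∀ (t s : G) (ω : Ω), α t (α s ω) = α (t * s) ω)
    (T : (G → ℝ) → (G → ℝ))
    (htrans : ∀ (g : G → ℝ) (t : G), T (fun s => g (s * t)) = fun s => T g (s * t))
    (f : Ω → ℝ)
    (hFmeas : ∀ t : G, Measurable (fun ω => T (fun u => f (α u ω)) t)) :
    (∀ (s : G) (ω : Ω) (t : G),
      T (fun u => f (α u (α s ω))) t = T (fun u => f (α u ω)) (t * s)) ∧
    (∀ t₁ t₂ : G, ∀ lam : ℝ, 0 < lam →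
      μ {ω | lam < |T (fun u => f (α u ω)) t₁|} =
      μ {ω | lam < |T (fun u => f (α u ω)) t₂|}) := by
  have hshift := transfer_apply_action α haction T htrans f
  refine ⟨hshift, fun t₁ t₂ lam _ => ?_⟩
  have hlevel : MeasurableSet {x : ℝ | lam < |x|} :=
    measurableSet_lt measurable_const measurable_id.abs
  exact (identDistrib_of_apply_action hmp hshift hFmeas t₂ t₁).measure_mem_eq hlevel

/-- For a transferable (semilocal, right-translation-invariant) operator `T` and
`F(ω,t) = f(α_t ω)`, `F'(ω,t) = T(F_ω)(t)`, one has `F'(α_s ω, t) = F'(ω, ts)` for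
all `s, t` and all `ω`; consequently the functions `ω ↦ F'(ω,t₁)` and `ω ↦ F'(ω,t₂)`
are equimeasurable. -/
theorem transferred_equimeasurable
    {Ω G : Type*} [MeasurableSpace Ω] [MeasurableSpace G] [Group G]
    (μ : Measure Ω) [SigmaFinite μ]
    (α : G → Ω → Ω)
    (hmp : ∀ t : G, MeasurePreserving (α t) μ μ)
    (hjm : Measurable (fun p : Ω × G => α p.2 p.1))
    (haction : ∀ (t s : G) (ω : Ω), α t (α s ω) = α (t * s) ω)
    (T : (G → ℝ) → (G → ℝ))
    (U : Set G)
    (hsemi : ∀ (g : G → ℝ) (V : Set G), (∀ x ∉ V, g x = 0) →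
      ∀ x ∉ V * U, T g x = 0)
    (htrans : ∀ (g : G → ℝ) (t : G), T (fun s => g (s * t)) = fun s => T g (s * t))
    (f : Ω → ℝ) (hf : Measurable f)
    (hmem : ∃ g₁ g₂ : Ω → ℝ, f = g₁ + g₂ ∧ Measurable g₁ ∧ Measurable g₂ ∧
      eLpNorm g₁ 1 μ < ⊤ ∧ eLpNorm g₂ ⊤ μ < ⊤)
    (hFmeas : ∀ t : G, Measurable (fun ω => T (fun u => f (α u ω)) t)) :
    (∀ (s : G) (ω : Ω) (t : G),
      T (fun u => f (α u (α s ω))) t = T (fun u => f (α u ω)) (t * s)) ∧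
    (∀ t₁ t₂ : G, ∀ lam : ℝ, 0 < lam →
      μ {ω | lam < |T (fun u => f (α u ω)) t₁|} =
      μ {ω | lam < |T (fun u => f (α u ω)) t₂|}) :=
  transferred_equimeasurable_general μ α hmp haction T htrans f hFmeas
end
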